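/- Let N ≥ 1, let S be an N×N real symmetric positive definite matrix, let Q = diag(q) with q_k ≥ q_min > 0 for all k, and let L be an N×N real symmetric positive semidefinite matrix. Fix an index i, let p = S_{ii} and u = [(Q + L)⁻¹]_{ii}, and let δ* = max(q_min − q_i, 1/p − 1/u). Then for every δ ≥ q_min − q_i, the matrix Q + L + δ·eᵢ·eᵢᵀ is positive definite, and −log det(Q + L + δ*·eᵢ·eᵢᵀ) + δ*·p ≤ −log det(Q + L + δ·eᵢ·eᵢᵀ) + δ·p. -/

import Mathlib

open Matrix

private lemma posDef_apply_self_pos {N : ℕ} {A : Matrix (Fin N) (Fin N) ℝ}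
    (hA : A.PosDef) (i : Fin N) : 0 < A i i := by
  exact hA.diag_pos

private lemma det_rank_one_update {N : ℕ} {A : Matrix (Fin N) (Fin N) ℝ}
    (hA : IsUnit A.det) (i : Fin N) (δ : ℝ) :
    (A + δ • vecMulVec (Pi.single i 1) (Pi.single i 1)).det = A.det * (1 + δ * A⁻¹ i i) := by
  have h1 : δ • vecMulVec (Pi.single i (1:ℝ)) (Pi.single i 1)
      = replicateCol Unit (δ • (Pi.single i 1 : Fin N → ℝ)) * replicateRow Unit ((Pi.single i 1 : Fin N → ℝ)) := by
    rw [← vecMulVec_eq]; ext j k; simp [vecMulVec, Pi.single_apply, mul_comm]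
  rw [h1, det_add_replicateCol_mul_replicateRow hA]
  congr 1
  rw [det_unique]
  simp [Matrix.mul_apply, replicateRow, replicateCol, dotProduct, Pi.single_apply, Finset.sum_ite_eq, mul_comm]

private lemma diag_update {N : ℕ} (q : Fin N → ℝ) (i : Fin N) (δ : ℝ) :
    Matrix.diagonal q + δ • vecMulVec (Pi.single i (1:ℝ)) (Pi.single i 1)
      = Matrix.diagonal (q + Pi.single i δ) := by
  ext j k
  by_cases h : j = k
  · subst h; by_cases h2 : j = i <;> simp [diagonal, vecMulVec, Pi.single_apply, h2]
  · simp [diagonal, vecMulVec, Pi.single_apply, h]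
    intro hj hk; exact ((h (hj.trans hk.symm).symm).elim : δ = 0)

theorem vertex_importance_update {N : ℕ} (hN : 1 ≤ N)
    (S : Matrix (Fin N) (Fin N) ℝ) (hS : S.PosDef)
    (q : Fin N → ℝ) (qmin : ℝ) (hqmin : 0 < qmin) (hq : ∀ k, qmin ≤ q k)
    (L : Matrix (Fin N) (Fin N) ℝ) (hL : L.PosSemidef)
    (i : Fin N) :
    let Q := Matrix.diagonal q
    let e : Fin N → ℝ := Pi.single i 1
    let p := S i i
    let u := (Q + L)⁻¹ i i
    let δs := max (qmin - q i) (1 / p - 1 / u)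
    ∀ δ : ℝ, qmin - q i ≤ δ →
      (Q + L + δ • vecMulVec e e).PosDef ∧
      -Real.log (Q + L + δs • vecMulVec e e).det + δs * p ≤
        -Real.log (Q + L + δ • vecMulVec e e).det + δ * p := by
  intro Q e p u δs
  -- basic positivity facts
  have hQ : Q.PosDef := by
    rw [show Q = Matrix.diagonal q from rfl, posDef_diagonal_iff]
    exact fun k => lt_of_lt_of_le hqmin (hq k)
  have hA : (Q + L).PosDef := hQ.add_posSemidef hL
  have hAdet : IsUnit (Q + L).det := isUnit_iff_ne_zero.mpr (ne_of_gt hA.det_pos)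
  have hu : 0 < u := posDef_apply_self_pos hA.inv i
  have hp : 0 < p := posDef_apply_self_pos hS i
  -- positive definiteness of updates, for any δ ≥ qmin - q i
  have hposdef : ∀ δ : ℝ, qmin - q i ≤ δ → (Q + L + δ • vecMulVec e e).PosDef := by
    intro δ hδ
    have : Q + L + δ • vecMulVec e e = Matrix.diagonal (q + Pi.single i δ) + L := by
      rw [show Q + L + δ • vecMulVec e e = (Q + δ • vecMulVec e e) + L from add_right_comm Q L _,
        diag_update]
    rw [this]
    refine Matrix.PosDef.add_posSemidef ?_ hL
    rw [posDef_diagonal_iff]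
    intro k
    rcases eq_or_ne k i with rfl | hk
    · have hval : (q + Pi.single k δ : Fin N → ℝ) k = q k + δ := by simp
      rw [hval]; linarith [hq k]
    · have hval : (q + Pi.single i δ : Fin N → ℝ) k = q k := by simp [Pi.single_apply, hk]
      rw [hval]; exact lt_of_lt_of_le hqmin (hq k)
  have hδs : qmin - q i ≤ δs := le_max_left _ _
  have hδsu : 1 / p - 1 / u ≤ δs := le_max_right _ _
  -- det formula and positivity of 1 + δ u
  have hdet : ∀ δ : ℝ, (Q + L + δ • vecMulVec e e).det = (Q + L).det * (1 + δ * u) := by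
    intro δ
    exact det_rank_one_update hAdet i δ
  have hfactor : ∀ δ : ℝ, qmin - q i ≤ δ → 0 < 1 + δ * u := by
    intro δ hδ
    have h1 : 0 < (Q + L).det * (1 + δ * u) := by rw [← hdet]; exact (hposdef δ hδ).det_pos
    nlinarith [hA.det_pos]
  intro δ hδ
  refine ⟨hposdef δ hδ, ?_⟩
  have h1 : 0 < 1 + δ * u := hfactor δ hδ
  have h2 : 0 < 1 + δs * u := hfactor δs hδs
  -- rewrite the logs
  have hlog : ∀ δ' : ℝ, qmin - q i ≤ δ' →
      Real.log (Q + L + δ' • vecMulVec e e).det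
        = Real.log (Q + L).det + Real.log (1 + δ' * u) := by
    intro δ' hδ'
    rw [hdet, Real.log_mul (ne_of_gt hA.det_pos) (ne_of_gt (hfactor δ' hδ'))]
  rw [hlog δ hδ, hlog δs hδs]
  -- suffices: log (1+δu) - log (1+δs u) ≤ (δ - δs) * p
  have key : (δ - δs) * u ≤ (δ - δs) * (p * (1 + δs * u)) := by
    have hbound : u ≤ p * (1 + δs * u) := by
      have : (1 / p - 1 / u) * (p * u) ≤ δs * (p * u) := by
        apply mul_le_mul_of_nonneg_right hδsu
        positivity
      have hexp : (1 / p - 1 / u) * (p * u) = u - p := by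
        field_simp
      nlinarith
    rcases le_or_gt δs δ with hcase | hcase
    · exact mul_le_mul_of_nonneg_left hbound (by linarith)
    · -- δ < δs forces δs = 1/p - 1/u, giving equality
      have hne : δs = 1 / p - 1 / u := by
        rcases max_choice (qmin - q i) (1 / p - 1 / u) with h | h
        · exfalso
          have hh : δs = qmin - q i := h
          linarith
        · exact h
      have hequ : p * (1 + δs * u) = u := by
        rw [hne]
        field_simp
        ring
      rw [hequ]
  have hlogle : Real.log (1 + δ * u) - Real.log (1 + δs * u) ≤ (δ - δs) * p := by
    rw [← Real.log_div (ne_of_gt h1) (ne_of_gt h2)]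
    have h3 : Real.log ((1 + δ * u) / (1 + δs * u)) ≤ (1 + δ * u) / (1 + δs * u) - 1 :=
      Real.log_le_sub_one_of_pos (by positivity)
    have h4 : (1 + δ * u) / (1 + δs * u) - 1 = ((δ - δs) * u) / (1 + δs * u) := by
      rw [div_sub_one (ne_of_gt h2)]; congr 1; ring
    have h5 : ((δ - δs) * u) / (1 + δs * u) ≤ (δ - δs) * p := by
      rw [div_le_iff₀ h2]
      calc (δ - δs) * u ≤ (δ - δs) * (p * (1 + δs * u)) := key
        _ = (δ - δs) * p * (1 + δs * u) := by ring
    linarith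
  linarith
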